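/- Suppose each Φᵏ is differentiable at φ_k with Φᵏ'(φ_k) = aₖ and |aₖ| ≥ δ > 0, and the residual R = z - Σₖ Φᵏ(φ_k) is nonzero. Then for all sufficiently small μ > 0, the increments Δφ_k = μR/(K·aₖ) satisfy |z - Σₖ Φᵏ(φ_k + Δφ_k)| < |R|. -/

import Mathlib

/-!
Along the line μ ↦ φ + μ v with v_k = R / (K a_k), each term Φᵏ moves to first order by
a_k v_k = R / K, so the residual r(μ) = z - Σₖ Φᵏ(φ_k + μ v_k) satisfies r(0) = R and r'(0) = -R.
Hence (r²)'(0) = -2R² < 0, and |r| decreases strictly on some interval (0, μ₀).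
-/

open Filter Topology Finset

theorem HasDerivAt.eventually_lt_of_deriv_neg {f : ℝ → ℝ} {f' x : ℝ} (hf : HasDerivAt f f' x)
    (hf' : f' < 0) : ∀ᶠ y in 𝓝[>] x, f y < f x := by
  have hslope : Tendsto (slope f x) (𝓝[>] x) (𝓝 f') :=
    (hasDerivWithinAt_iff_tendsto_slope' (lt_irrefl x)).mp hf.hasDerivWithinAt
  filter_upwards [hslope (Iio_mem_nhds hf'), self_mem_nhdsWithin] with y hy hxy
  have hxy : 0 < y - x := sub_pos.mpr hxy
  rw [Set.mem_preimage, Set.mem_Iio, slope_def_field, div_neg_iff] at hy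
  rcases hy with ⟨-, h⟩ | ⟨h, -⟩ <;> linarith

theorem HasDerivAt.eventually_abs_lt {g : ℝ → ℝ} {g' x : ℝ} (hg : HasDerivAt g g' x)
    (h : g x * g' < 0) : ∀ᶠ y in 𝓝[>] x, |g y| < |g x| := by
  have hsq : HasDerivAt (fun y => g y ^ 2) (2 * (g x * g')) x := by
    simpa [mul_assoc] using hg.fun_pow 2
  filter_upwards [hsq.eventually_lt_of_deriv_neg (by linarith)] with y hy
  exact sq_lt_sq.mp hy

theorem hasDerivAt_sum_comp_const_add_mul {ι : Type*} (s : Finset ι) {Φ : ι → ℝ → ℝ}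
    {φ a : ι → ℝ} (v : ι → ℝ) (hΦ : ∀ k ∈ s, HasDerivAt (Φ k) (a k) (φ k)) :
    HasDerivAt (fun t => ∑ k ∈ s, Φ k (φ k + t * v k)) (∑ k ∈ s, a k * v k) 0 := by
  refine HasDerivAt.fun_sum fun k hk => ?_
  have hline : HasDerivAt (fun t : ℝ => φ k + t * v k) (v k) 0 := by
    simpa using ((hasDerivAt_id (0 : ℝ)).mul_const (v k)).const_add (φ k)
  exact (hΦ k hk).comp_of_eq 0 hline (by simp)

theorem stmt_13 (K : ℕ) (hK : 1 ≤ K) (δ : ℝ) (hδ : 0 < δ)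
    (Φ : Fin K → ℝ → ℝ) (φ : Fin K → ℝ) (a : Fin K → ℝ)
    (hdiff : ∀ k, HasDerivAt (Φ k) (a k) (φ k))
    (ha : ∀ k, δ ≤ |a k|)
    (z R : ℝ) (hR : R = z - ∑ k, Φ k (φ k)) (hR0 : R ≠ 0) :
    ∃ μ₀ > 0, ∀ μ : ℝ, 0 < μ → μ < μ₀ →
      |z - ∑ k, Φ k (φ k + μ * R / ((K:ℝ) * a k))| < |R| := by
  have hK0 : (K : ℝ) ≠ 0 := Nat.cast_ne_zero.mpr (Nat.one_le_iff_ne_zero.mp hK)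
  have ha0 (k : Fin K) : a k ≠ 0 := abs_pos.mp (hδ.trans_le (ha k))
  have hrate : ∑ k, a k * (R / (K * a k)) = R := by
    have hterm (k : Fin K) : a k * (R / (K * a k)) = R / K := by field_simp [ha0 k]
    simp [hterm, mul_div_cancel₀ R hK0]
  have hresidual : HasDerivAt (fun μ => z - ∑ k, Φ k (φ k + μ * (R / (K * a k)))) (0 - R) 0 :=
    (hasDerivAt_const 0 z).sub
      ((hasDerivAt_sum_comp_const_add_mul univ _ fun k _ => hdiff k).congr_deriv hrate)
  have hdecrease := hresidual.eventually_abs_lt (by simpa [← hR] using mul_self_pos.mpr hR0)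
  obtain ⟨μ₀, hμ₀, hsmall⟩ := (nhdsGT_basis (0 : ℝ)).eventually_iff.mp hdecrease
  refine ⟨μ₀, hμ₀, fun μ hμ hμμ₀ => ?_⟩
  simpa [mul_div_assoc, ← hR] using hsmall ⟨hμ, hμμ₀⟩
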